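/- arXiv:2509.06725 — 7 statements merged into one kernel-verified Lean document; each statement's English description precedes it below -/
import Mathlib

section
/- Let 𝒜 be a nonempty set of infinite real matrices and ℬ the set of all row-mixtures of matrices in 𝒜 (each row of B ∈ ℬ is a row of some A ∈ 𝒜, with the same row index). Suppose x is a bounded real sequence lying in the domain of every A ∈ 𝒜, and for each B ∈ ℬ the sequence (B_n x) converges to some limit η_B. Then all the limits η_B are equal. -/
open Filter

/-!
If (B_n x) → η and (B'_n x) → η', interleave the rows of B and B': the even rows of the
mixture C come from B and the odd rows from B'. C is again a row-mixture of 𝒜, so (C_n x)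
converges; its even and odd subsequences are subsequences of (B_n x) and (B'_n x), hence η = η'.
-/

/-- The series `∑ k, a k` converges (partial sums) to `l`. -/
def SeriesConv (a : ℕ → ℝ) (l : ℝ) : Prop :=
  Tendsto (fun m => ∑ k ∈ Finset.range m, a k) atTop (nhds l)

/-- `B` is a row-mixture of the family `𝒜`. -/
def RowMix (𝒜 : Set (ℕ → ℕ → ℝ)) (B : ℕ → ℕ → ℝ) : Prop :=
  ∀ n, ∃ A ∈ 𝒜, ∀ k, B n k = A n k

theorem RowMix.ite {𝒜 : Set (ℕ → ℕ → ℝ)} {B B' : ℕ → ℕ → ℝ} (hB : RowMix 𝒜 B)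
    (hB' : RowMix 𝒜 B') (p : ℕ → Prop) [DecidablePred p] :
    RowMix 𝒜 fun n => if p n then B n else B' n := by
  intro n
  show ∃ A ∈ 𝒜, ∀ k, (if p n then B n else B' n) k = A n k
  split_ifs
  · exact hB n
  · exact hB' n

theorem eq_of_tendsto_ite_even {α : Type*} [TopologicalSpace α] [T2Space α]
    {u v : ℕ → α} {a b c : α} (hu : Tendsto u atTop (nhds a)) (hv : Tendsto v atTop (nhds b))
    (huv : Tendsto (fun n => if Even n then u n else v n) atTop (nhds c)) : a = b := by
  have hev : Tendsto (fun m => 2 * m) atTop atTop := tendsto_id.const_mul_atTop' two_pos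
  have hodd : Tendsto (fun m => 2 * m + 1) atTop atTop := (tendsto_add_atTop_nat 1).comp hev
  have hu_c : Tendsto (fun m => u (2 * m)) atTop (nhds c) :=
    (huv.comp hev).congr fun m => by simp
  have hv_c : Tendsto (fun m => v (2 * m + 1)) atTop (nhds c) :=
    (huv.comp hodd).congr fun m => by simp
  rw [tendsto_nhds_unique (hu.comp hev) hu_c, tendsto_nhds_unique (hv.comp hodd) hv_c]

theorem stmt1_general (𝒜 : Set (ℕ → ℕ → ℝ))
    (x : ℕ → ℝ)
    (B B' : ℕ → ℕ → ℝ) (hB : RowMix 𝒜 B) (hB' : RowMix 𝒜 B')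
    (T T' : ℕ → ℝ)
    (hT : ∀ n, SeriesConv (fun k => B n k * x k) (T n))
    (hT' : ∀ n, SeriesConv (fun k => B' n k * x k) (T' n))
    (η η' : ℝ)
    (hconv : Tendsto T atTop (nhds η)) (hconv' : Tendsto T' atTop (nhds η'))
    (hall : ∀ C, RowMix 𝒜 C → ∀ U : ℕ → ℝ,
      (∀ n, SeriesConv (fun k => C n k * x k) (U n)) →
      ∃ ηC, Tendsto U atTop (nhds ηC)) :
    η = η' := by
  have hrows (n : ℕ) : SeriesConv (fun k => (if Even n then B n else B' n) k * x k)
      (if Even n then T n else T' n) := by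
    split_ifs
    · exact hT n
    · exact hT' n
  obtain ⟨ηC, hηC⟩ := hall _ (hB.ite hB' Even) _ hrows
  exact eq_of_tendsto_ite_even hconv hconv' hηC

theorem stmt1 (𝒜 : Set (ℕ → ℕ → ℝ)) (h𝒜 : 𝒜.Nonempty)
    (x : ℕ → ℝ) (hx : ∃ C, ∀ n, |x n| ≤ C)
    (hdom : ∀ A ∈ 𝒜, ∀ n, ∃ l, SeriesConv (fun k => A n k * x k) l)
    (B B' : ℕ → ℕ → ℝ) (hB : RowMix 𝒜 B) (hB' : RowMix 𝒜 B')
    (T T' : ℕ → ℝ)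
    (hT : ∀ n, SeriesConv (fun k => B n k * x k) (T n))
    (hT' : ∀ n, SeriesConv (fun k => B' n k * x k) (T' n))
    (η η' : ℝ)
    (hconv : Tendsto T atTop (nhds η)) (hconv' : Tendsto T' atTop (nhds η'))
    (hall : ∀ C, RowMix 𝒜 C → ∀ U : ℕ → ℝ,
      (∀ n, SeriesConv (fun k => C n k * x k) (U n)) →
      ∃ ηC, Tendsto U atTop (nhds ηC)) :
    η = η' :=
  stmt1_general 𝒜 x B B' hB hB' T T' hT hT' η η' hconv hconv' hall
end

section
/- Let 𝒜 be a nonempty set of infinite real matrices and ℬ the set of row-mixtures of 𝒜. Suppose x is a sequence in the domain of every A ∈ 𝒜 such that there exists η ∈ ℝ with lim_n B_n x = η for every B ∈ ℬ. Then lim_n A_n x = η uniformly in A ∈ 𝒜, i.e., for every ε > 0 there is N such that |A_n x − η| ≤ ε for all n ≥ N and all A ∈ 𝒜. -/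
/-!
If the convergence were not uniform, choose in each row `n` a matrix of `𝒜` whose `n`-th
transform is `ε`-far from `η`, whenever one exists. Gluing these rows gives a row-mixture whose
transforms do not converge to `η`.
-/

open Filter Topology

theorem tendstoUniformlyOn_const_of_forall_seq_tendsto {ι β : Type*} [UniformSpace β]
    {F : ℕ → ι → β} {s : Set ι} {η : β}
    (h : ∀ c : ℕ → ι, (∀ n, c n ∈ s) → Tendsto (fun n => F n (c n)) atTop (𝓝 η)) :
    TendstoUniformlyOn F (fun _ => η) atTop s := by
  intro u hu
  by_contra hnot
  have hbad : ∃ᶠ n in atTop, ∃ i ∈ s, (η, F n i) ∉ u := by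
    simpa only [not_eventually, not_forall, exists_prop] using hnot
  obtain ⟨i₀, hi₀, -⟩ := hbad.exists.choose_spec
  have hpick : ∀ n, ∃ i ∈ s, (∃ j ∈ s, (η, F n j) ∉ u) → (η, F n i) ∉ u := by
    intro n
    by_cases hn : ∃ j ∈ s, (η, F n j) ∉ u
    · obtain ⟨j, hj, hju⟩ := hn
      exact ⟨j, hj, fun _ => hju⟩
    · exact ⟨i₀, hi₀, fun h' => absurd h' hn⟩
  choose c hcs hcbad using hpick
  have hgood : ∀ᶠ n in atTop, (η, F n (c n)) ∈ u := h c hcs (mem_nhds_left η hu)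
  obtain ⟨n, hn, hnu⟩ := (hbad.and_eventually hgood).exists
  exact hcbad n hn hnu

theorem stmt2_general (𝒜 : Set (ℕ → ℕ → ℝ))
    (x : ℕ → ℝ)
    (η : ℝ)
    (hall : ∀ B, RowMix 𝒜 B → ∀ T : ℕ → ℝ,
      (∀ n, SeriesConv (fun k => B n k * x k) (T n)) →
      Tendsto T atTop (nhds η))
    (S : (ℕ → ℕ → ℝ) → ℕ → ℝ)
    (hS : ∀ A ∈ 𝒜, ∀ n, SeriesConv (fun k => A n k * x k) (S A n)) :
    ∀ ε > 0, ∃ N, ∀ n ≥ N, ∀ A ∈ 𝒜, |S A n - η| ≤ ε := by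
  have hunif : TendstoUniformlyOn (fun n A => S A n) (fun _ => η) atTop 𝒜 := by
    refine tendstoUniformlyOn_const_of_forall_seq_tendsto fun c hc => ?_
    exact hall (fun n k => c n n k) (fun n => ⟨c n, hc n, fun _ => rfl⟩) _
      (fun n => hS (c n) (hc n) n)
  intro ε hε
  obtain ⟨N, hN⟩ := eventually_atTop.mp (Metric.tendstoUniformlyOn_iff.mp hunif ε hε)
  refine ⟨N, fun n hn A hA => ?_⟩
  rw [abs_sub_comm, ← Real.dist_eq]
  exact (hN n hn A hA).le

theorem stmt2 (𝒜 : Set (ℕ → ℕ → ℝ)) (h𝒜 : 𝒜.Nonempty)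
    (x : ℕ → ℝ)
    (hdom : ∀ A ∈ 𝒜, ∀ n, ∃ l, SeriesConv (fun k => A n k * x k) l)
    (η : ℝ)
    (hall : ∀ B, RowMix 𝒜 B → ∀ T : ℕ → ℝ,
      (∀ n, SeriesConv (fun k => B n k * x k) (T n)) →
      Tendsto T atTop (nhds η))
    (S : (ℕ → ℕ → ℝ) → ℕ → ℝ)
    (hS : ∀ A ∈ 𝒜, ∀ n, SeriesConv (fun k => A n k * x k) (S A n)) :
    ∀ ε > 0, ∃ N, ∀ n ≥ N, ∀ A ∈ 𝒜, |S A n - η| ≤ ε :=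
  stmt2_general 𝒜 x η hall S hS
end

section
/- Let 𝒜 be a nonempty family of infinite real matrices with sup_{A ∈ 𝒜} sup_n ∑_k |a_{n,k}| < ∞, and let ℬ be the set of row-mixtures of 𝒜. Then for every bounded real sequence x, limsup_n sup_{A ∈ 𝒜} A_n x = sup_{B ∈ ℬ} limsup_n B_n x. -/
set_option maxHeartbeats 1000000


open Filter

theorem stmt4 (𝒜 : Set (ℕ → ℕ → ℝ)) (h𝒜 : 𝒜.Nonempty)
    (C : ℝ)
    (hnorm : ∀ A ∈ 𝒜, ∀ n, Summable (fun k => |A n k|) ∧ ∑' k, |A n k| ≤ C)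
    (x : ℕ → ℝ) (hx : ∃ M, ∀ n, |x n| ≤ M) :
    limsup (fun n => sSup ((fun A : ℕ → ℕ → ℝ => ∑' k, A n k * x k) '' 𝒜)) atTop =
      sSup ((fun B : ℕ → ℕ → ℝ => limsup (fun n => ∑' k, B n k * x k) atTop) ''
        {B | RowMix 𝒜 B}) := by
  obtain ⟨M, hM⟩ := hx
  obtain ⟨A₀, hA₀⟩ := h𝒜
  set K : ℝ := C * M with hK
  -- summability and bound for each row
  have key : ∀ A ∈ 𝒜, ∀ n, Summable (fun k => A n k * x k) ∧ |∑' k, A n k * x k| ≤ K := by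
    intro A hA n
    obtain ⟨hs, hb⟩ := hnorm A hA n
    have habs : Summable (fun k => |A n k * x k|) := by
      refine Summable.of_nonneg_of_le (fun k => abs_nonneg _) (fun k => ?_) (hs.mul_right M)
      rw [abs_mul]
      exact mul_le_mul_of_nonneg_left (hM k) (abs_nonneg _)
    have hsum : Summable (fun k => A n k * x k) := habs.of_abs
    refine ⟨hsum, ?_⟩
    have h1 : ‖∑' k, A n k * x k‖ ≤ ∑' k, ‖A n k * x k‖ :=
      norm_tsum_le_tsum_norm (f := fun k => A n k * x k) (by simpa only [Real.norm_eq_abs] using habs)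
    calc |∑' k, A n k * x k| ≤ ∑' k, |A n k * x k| := by simpa only [Real.norm_eq_abs] using h1
      _ ≤ ∑' k, |A n k| * M := by
          refine Summable.tsum_le_tsum (fun k => ?_) habs (hs.mul_right M)
          rw [abs_mul]
          exact mul_le_mul_of_nonneg_left (hM k) (abs_nonneg _)
      _ = (∑' k, |A n k|) * M := tsum_mul_right
      _ ≤ C * M := by
          have hM0 : 0 ≤ M := le_trans (abs_nonneg _) (hM 0)
          exact mul_le_mul_of_nonneg_right hb hM0
  set S : ℕ → Set ℝ := fun n => (fun A : ℕ → ℕ → ℝ => ∑' k, A n k * x k) '' 𝒜 with hS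
  have hSne : ∀ n, (S n).Nonempty := fun n => ⟨_, ⟨A₀, hA₀, rfl⟩⟩
  have hSbdd : ∀ n, ∀ y ∈ S n, y ≤ K := by
    rintro n y ⟨A, hA, rfl⟩
    exact le_trans (le_abs_self _) (key A hA n).2
  have hSbddA : ∀ n, BddAbove (S n) := fun n => ⟨K, fun y hy => hSbdd n y hy⟩
  set f : ℕ → ℝ := fun n => sSup (S n) with hf
  have hfub : ∀ n, f n ≤ K := fun n => csSup_le (hSne n) (hSbdd n)
  have hflb : ∀ n, -K ≤ f n := by
    intro n
    have h1 : -K ≤ ∑' k, A₀ n k * x k := neg_le_of_abs_le (key A₀ hA₀ n).2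
    exact h1.trans (le_csSup (hSbddA n) ⟨A₀, hA₀, rfl⟩)
  -- for rowmix B, bounds and membership
  have hBmem : ∀ B, RowMix 𝒜 B → ∀ n, (∑' k, B n k * x k) ∈ S n := by
    intro B hB n
    obtain ⟨A, hA, hAB⟩ := hB n
    have : (fun k => B n k * x k) = fun k => A n k * x k := by
      funext k; rw [hAB k]
    refine ⟨A, hA, ?_⟩
    rw [this]
  have hBle : ∀ B, RowMix 𝒜 B → ∀ n, (∑' k, B n k * x k) ≤ f n := fun B hB n =>
    le_csSup (hSbddA n) (hBmem B hB n)
  have hBabs : ∀ B, RowMix 𝒜 B → ∀ n, |∑' k, B n k * x k| ≤ K := by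
    intro B hB n
    obtain ⟨A, hA, hAB⟩ := hB n
    have : (fun k => B n k * x k) = fun k => A n k * x k := by
      funext k; rw [hAB k]
    rw [this]
    exact (key A hA n).2
  set T : Set ℝ := (fun B : ℕ → ℕ → ℝ => limsup (fun n => ∑' k, B n k * x k) atTop) ''
      {B | RowMix 𝒜 B} with hT
  have hA₀mix : RowMix 𝒜 A₀ := fun n => ⟨A₀, hA₀, fun _ => rfl⟩
  have hTne : T.Nonempty := ⟨_, ⟨A₀, hA₀mix, rfl⟩⟩
  have hfbdd : IsBoundedUnder (· ≤ ·) atTop f := isBoundedUnder_of ⟨K, hfub⟩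
  have hfcob : IsCoboundedUnder (· ≤ ·) atTop f :=
    isCoboundedUnder_le_of_le atTop (fun n => hflb n)
  have hTub : ∀ y ∈ T, y ≤ limsup f atTop := by
    rintro y ⟨B, hB, rfl⟩
    refine limsup_le_limsup (Eventually.of_forall (hBle B hB)) ?_ hfbdd
    exact isCoboundedUnder_le_of_le atTop (fun n => neg_le_of_abs_le (hBabs B hB n))
  have hTbdd : BddAbove T := ⟨_, fun y hy => hTub y hy⟩
  apply le_antisymm
  · -- limsup f ≤ sSup T : construct near-optimal B
    have hex : ∀ n : ℕ, ∃ A ∈ 𝒜, f n - 1 / (n + 1) < ∑' k, A n k * x k := by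
      intro n
      have hlt : f n - 1 / (n + 1 : ℝ) < sSup (S n) := by
        have : (0:ℝ) < 1 / (n + 1) := by positivity
        linarith [le_refl (f n)]
      obtain ⟨y, hy, hy2⟩ := exists_lt_of_lt_csSup (hSne n) hlt
      obtain ⟨A, hA, rfl⟩ := hy
      exact ⟨A, hA, hy2⟩
    choose Ach hAch hAch2 using hex
    set B : ℕ → ℕ → ℝ := fun n => Ach n n with hB
    have hBmix : RowMix 𝒜 B := fun n => ⟨Ach n, hAch n, fun _ => rfl⟩
    have hmem : limsup (fun n => ∑' k, B n k * x k) atTop ∈ T := ⟨B, hBmix, rfl⟩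
    refine le_trans ?_ (le_csSup hTbdd hmem)
    set L := limsup (fun n => ∑' k, B n k * x k) atTop with hL
    -- limsup f ≤ L : for all ε > 0, limsup f ≤ L + ε
    by_contra hcon
    push_neg at hcon
    set ε := (limsup f atTop - L) / 2 with hε
    have hε0 : 0 < ε := by simp [hε]; linarith
    have hBbd : IsBoundedUnder (· ≤ ·) atTop (fun n => ∑' k, B n k * x k) :=
      isBoundedUnder_of ⟨K, fun n => le_trans (le_abs_self _) (hBabs B hBmix n)⟩
    have hev1 : ∀ᶠ n in atTop, (∑' k, B n k * x k) < L + ε / 2 := by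
      refine eventually_lt_of_limsup_lt ?_ hBbd
      rw [← hL]; linarith
    have hev2 : ∀ᶠ n : ℕ in atTop, 1 / (n + 1 : ℝ) < ε / 2 := by
      have hε2 : (0:ℝ) < ε / 2 := by linarith
      exact tendsto_one_div_add_atTop_nhds_zero_nat.eventually (eventually_lt_nhds hε2)
    have hev : ∀ᶠ n in atTop, f n ≤ L + ε := by
      filter_upwards [hev1, hev2] with n h1 h2
      have h3 : f n - 1 / (n + 1 : ℝ) < ∑' k, B n k * x k := hAch2 n
      linarith
    have : limsup f atTop ≤ L + ε := limsup_le_of_le hfcob hev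
    linarith [hcon, this]
  · exact csSup_le hTne hTub
end

section
/- Let A = (a_{n,k}) be an infinite real matrix with ‖A‖ := sup_n ∑_k |a_{n,k}| < ∞. If (C1) lim_n ∑_{k ∈ E} |a_{n,k}| = 0 for every finite set E, (C2) lim_n ∑_k a_{n,k} = 1, and (C3) lim_n ∑_k |a_{n,k}| = 1, then for every bounded real sequence x, limsup_n A_n x ≤ limsup_n x_n. -/
/-!
Fix `c > limsup x`, so that `x k < c` for `k ≥ K`, and put `y = x - c`. Then
`A_n x = c ∑_k a_{n,k} + ∑_k a_{n,k} y_k`. Each term of the last series is at most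
`B |a_{n,k}|` for `k < K` and at most `B (|a_{n,k}| - a_{n,k})` for `k ≥ K`, where `B` bounds `|y|`,
so by (C1), (C2), (C3) the bound on `A_n x` tends to `c`.
-/

open Filter

lemma mul_le_mul_abs_sub_self_of_nonpos {a y B : ℝ} (hyB : -B ≤ y) (hy : y ≤ 0) :
    a * y ≤ B * (|a| - a) := by
  rcases abs_cases a with ⟨ha, ha0⟩ | ⟨ha, ha0⟩ <;> rw [ha] <;> nlinarith

lemma abs_mul_le_abs_mul_of_abs_le {a y B : ℝ} (hy : |y| ≤ B) : |a * y| ≤ |a| * B := by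
  rw [abs_mul]
  gcongr

section Series

variable {ι : Type*} {a y : ι → ℝ} {B : ℝ}

lemma summable_mul_of_abs_le (ha : Summable fun k => |a k|) (hyB : ∀ k, |y k| ≤ B) :
    Summable fun k => a k * y k :=
  (ha.mul_right B).of_norm_bounded fun k => abs_mul_le_abs_mul_of_abs_le (hyB k)

lemma abs_tsum_mul_le (ha : Summable fun k => |a k|) (hyB : ∀ k, |y k| ≤ B) :
    |∑' k, a k * y k| ≤ (∑' k, |a k|) * B :=
  tsum_of_norm_bounded (f := fun k => a k * y k) (ha.hasSum.mul_right B) fun k =>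
    abs_mul_le_abs_mul_of_abs_le (hyB k)

lemma tsum_mul_le_of_nonpos_of_notMem (ha : Summable fun k => |a k|) (hyB : ∀ k, |y k| ≤ B)
    (E : Finset ι) (hy : ∀ k ∉ E, y k ≤ 0) :
    ∑' k, a k * y k ≤ B * (∑ k ∈ E, |a k|) + B * (∑' k, |a k| - ∑' k, a k) := by
  have hind : Summable fun k => (↑E : Set ι).indicator (fun k => |a k|) k :=
    summable_of_ne_finset_zero fun k hk => Set.indicator_of_notMem hk _
  have hbound : ∀ k, a k * y k ≤
      B * (↑E : Set ι).indicator (fun k => |a k|) k + B * (|a k| - a k) := by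
    intro k
    have hB : 0 ≤ B := (abs_nonneg _).trans (hyB k)
    by_cases hk : k ∈ E
    · have h1 : a k * y k ≤ |a k| * B :=
        (le_abs_self _).trans (abs_mul_le_abs_mul_of_abs_le (hyB k))
      have h2 : 0 ≤ B * (|a k| - a k) := mul_nonneg hB (sub_nonneg.2 (le_abs_self _))
      rw [Set.indicator_of_mem (Finset.mem_coe.2 hk)]
      linarith
    · rw [Set.indicator_of_notMem (Finset.mem_coe.not.2 hk), mul_zero, zero_add]
      exact mul_le_mul_abs_sub_self_of_nonpos (abs_le.1 (hyB k)).1 (hy k hk)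
  have hsub : Summable fun k => |a k| - a k := ha.sub ha.of_abs
  calc ∑' k, a k * y k
      ≤ ∑' k, (B * (↑E : Set ι).indicator (fun k => |a k|) k + B * (|a k| - a k)) :=
        (summable_mul_of_abs_le ha hyB).tsum_le_tsum hbound
          ((hind.mul_left B).add (hsub.mul_left B))
    _ = B * (∑ k ∈ E, |a k|) + B * (∑' k, |a k| - ∑' k, a k) := by
      rw [(hind.mul_left B).tsum_add (hsub.mul_left B), tsum_mul_left, tsum_mul_left,
        ← sum_eq_tsum_indicator, ha.tsum_sub ha.of_abs]

end Series

lemma limsup_tsum_mul_le {a : ℕ → ℕ → ℝ} {x : ℕ → ℝ} {M c : ℝ}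
    (hsum : ∀ n, Summable fun k => |a n k|)
    (hC1 : ∀ E : Finset ℕ, Tendsto (fun n => ∑ k ∈ E, |a n k|) atTop (nhds 0))
    (hC2 : Tendsto (fun n => ∑' k, a n k) atTop (nhds 1))
    (hC3 : Tendsto (fun n => ∑' k, |a n k|) atTop (nhds 1))
    (hxM : ∀ k, |x k| ≤ M) (hxc : ∀ᶠ k in atTop, x k ≤ c)
    (hcobdd : IsCoboundedUnder (· ≤ ·) atTop fun n => ∑' k, a n k * x k) :
    limsup (fun n => ∑' k, a n k * x k) atTop ≤ c := by
  obtain ⟨K, hK⟩ := eventually_atTop.1 hxc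
  set B := M + |c|
  have hyB : ∀ k, |x k - c| ≤ B := fun k => (abs_sub _ _).trans (add_le_add_left (hxM k) _)
  have hy : ∀ k ∉ Finset.range K, x k - c ≤ 0 := fun k hk =>
    sub_nonpos.2 (hK k (not_lt.1 (Finset.mem_range.not.1 hk)))
  have hsplit : ∀ n, ∑' k, a n k * x k = c * ∑' k, a n k + ∑' k, a n k * (x k - c) := fun n => by
    have hsa := (hsum n).of_abs
    rw [← tsum_mul_left, ← (hsa.mul_left c).tsum_add (summable_mul_of_abs_le (hsum n) hyB)]
    exact tsum_congr fun k => by ring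
  set g := fun n =>
    c * ∑' k, a n k + (B * ∑ k ∈ Finset.range K, |a n k| + B * (∑' k, |a n k| - ∑' k, a n k))
  have hle : ∀ n, ∑' k, a n k * x k ≤ g n := fun n => by
    rw [hsplit n]
    exact add_le_add_right (tsum_mul_le_of_nonpos_of_notMem (hsum n) hyB _ hy) _
  have hg : Tendsto g atTop (nhds c) := by
    simpa using (hC2.const_mul c).add (((hC1 _).const_mul B).add ((hC3.sub hC2).const_mul B))
  calc limsup (fun n => ∑' k, a n k * x k) atTop ≤ limsup g atTop :=
        limsup_le_limsup (Eventually.of_forall hle) hcobdd hg.isBoundedUnder_le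
    _ = c := hg.limsup_eq

theorem stmt5 (a : ℕ → ℕ → ℝ) (C : ℝ)
    (hnorm : ∀ n, Summable (fun k => |a n k|) ∧ ∑' k, |a n k| ≤ C)
    (hC1 : ∀ E : Finset ℕ, Tendsto (fun n => ∑ k ∈ E, |a n k|) atTop (nhds 0))
    (hC2 : Tendsto (fun n => ∑' k, a n k) atTop (nhds 1))
    (hC3 : Tendsto (fun n => ∑' k, |a n k|) atTop (nhds 1)) :
    ∀ x : ℕ → ℝ, (∃ M, ∀ n, |x n| ≤ M) →
      limsup (fun n => ∑' k, a n k * x k) atTop ≤ limsup x atTop := by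
  rintro x ⟨M, hxM⟩
  have hbdd : IsBoundedUnder (· ≤ ·) atTop x :=
    isBoundedUnder_of ⟨M, fun k => (abs_le.1 (hxM k)).2⟩
  have hcobdd : IsCoboundedUnder (· ≤ ·) atTop fun n => ∑' k, a n k * x k := by
    have hM : 0 ≤ M := (abs_nonneg _).trans (hxM 0)
    refine IsBoundedUnder.isCoboundedUnder_le (isBoundedUnder_of ⟨-(C * M), fun n => ?_⟩)
    exact neg_le_of_abs_le
      ((abs_tsum_mul_le (hnorm n).1 hxM).trans (mul_le_mul_of_nonneg_right (hnorm n).2 hM))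
  refine le_of_forall_gt_imp_ge_of_dense fun c hc => ?_
  exact limsup_tsum_mul_le (fun n => (hnorm n).1) hC1 hC2 hC3 hxM
    ((eventually_lt_of_limsup_lt hc hbdd).mono fun _ => le_of_lt) hcobdd
end

section
/- Let A = (a_{n,k}) be an infinite real matrix with sup_n ∑_k |a_{n,k}| < ∞. If limsup_n A_n x ≤ limsup_n x_n for every bounded real sequence x, then lim_n ∑_k a_{n,k} = 1 and lim_n ∑_k |a_{n,k}| = 1. -/
/-!
Testing the hypothesis on `x` and on `-x` shows that `A x → c` whenever `x → c`; with `x = 1`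
and `x = eₖ` this gives `∑ₖ aₙₖ → 1` and `aₙₖ → 0` for every `k`. Since `∑ₖ aₙₖ ≤ ∑ₖ |aₙₖ|`,
it remains to show `limsup ∑ₖ |aₙₖ| ≤ 1`, which is a gliding hump argument: choose rows
`n₁ < n₂ < ⋯` with `∑ₖ |a_{nⱼ,k}|` close to the limsup and consecutive blocks of columns carrying
almost all of the mass of row `nⱼ`; because the columns tend to zero, the earlier blocks carry
little mass of the later rows. Letting `x` be the sign of `a_{nⱼ,k}` on the `j`-th block makes
`A_{nⱼ} x` close to `∑ₖ |a_{nⱼ,k}|`, while `limsup x ≤ 1`.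
-/

open Filter Topology

lemma tendsto_of_limsup_le_of_limsup_neg_le {α : Type*} {l : Filter α} {u : α → ℝ} {c B : ℝ}
    (hB : ∀ n, |u n| ≤ B) (h : limsup u l ≤ c) (h' : limsup (fun n => -u n) l ≤ -c) :
    Tendsto u l (𝓝 c) := by
  refine tendsto_order.2 ⟨fun b hb => ?_, fun b hb => eventually_lt_of_limsup_lt (h.trans_lt hb)
    (isBoundedUnder_of ⟨B, fun n => (le_abs_self _).trans (hB n)⟩)⟩
  filter_upwards [eventually_lt_of_limsup_lt (h'.trans_lt (neg_lt_neg hb))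
    (isBoundedUnder_of ⟨B, fun n => (neg_le_abs _).trans (hB n)⟩)] with n hn
  linarith

section Row

variable {ι : Type*} {f x : ι → ℝ}

lemma summable_mul_of_abs_le_s6 {M : ℝ} (hf : Summable fun k => |f k|) (hx : ∀ k, |x k| ≤ M) :
    Summable fun k => f k * x k :=
  (hf.mul_right M).of_norm_bounded fun k => by
    rw [Real.norm_eq_abs, abs_mul]
    exact mul_le_mul_of_nonneg_left (hx k) (abs_nonneg _)

lemma abs_tsum_mul_le_s6 {M : ℝ} (hf : Summable fun k => |f k|) (hx : ∀ k, |x k| ≤ M) :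
    |∑' k, f k * x k| ≤ (∑' k, |f k|) * M :=
  tsum_of_norm_bounded (hf.hasSum.mul_right M) fun k => by
    rw [Real.norm_eq_abs, abs_mul]
    exact mul_le_mul_of_nonneg_left (hx k) (abs_nonneg _)

lemma tsum_abs_sub_tsum_mul_le (hf : Summable fun k => |f k|) (hx : ∀ k, |x k| ≤ 1)
    (s : Finset ι) (hs : ∀ k ∈ s, f k * x k = |f k|) :
    ∑' k, |f k| - ∑' k, f k * x k ≤ 2 * (∑' k, |f k| - ∑ k ∈ s, |f k|) := by
  have hfx := summable_mul_of_abs_le_s6 hf hx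
  have hnonneg : ∀ k, 0 ≤ |f k| + f k * x k := fun k => by
    have : |f k * x k| ≤ |f k| := by
      rw [abs_mul]; exact mul_le_of_le_one_right (abs_nonneg _) (hx k)
    linarith [neg_abs_le (f k * x k)]
  have key := (hf.add hfx).sum_le_tsum s fun k _ => hnonneg k
  rw [Finset.sum_congr rfl fun k hk => by rw [hs k hk], hf.tsum_add hfx] at key
  simp only [← two_mul, ← Finset.mul_sum] at key
  linarith

end Row

lemma exists_abs_le_one_mul_eq_abs_on_blocks (F : ℕ → ℕ → ℝ) {m : ℕ → ℕ} (hm : StrictMono m) :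
    ∃ x : ℕ → ℝ, (∀ k, |x k| ≤ 1) ∧
      ∀ j, ∀ k ∈ Finset.Ico (m j) (m (j + 1)), F j k * x k = |F j k| := by
  have hblock : ∀ k, ∃ j, k < m (j + 1) := fun k => ⟨k, Nat.lt_of_succ_le (hm.id_le (k + 1))⟩
  refine ⟨fun k => SignType.sign (F (Nat.find (hblock k)) k), fun k => ?_, fun j k hk => ?_⟩
  · rcases lt_trichotomy (F (Nat.find (hblock k)) k) 0 with h | h | h <;> simp [h]
  · obtain ⟨hjk, hkj⟩ := Finset.mem_Ico.1 hk
    have : Nat.find (hblock k) = j := by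
      refine le_antisymm (Nat.find_le hkj) (not_lt.1 fun hlt => ?_)
      exact (Nat.find_spec (hblock k)).not_ge ((hm.monotone hlt).trans hjk)
    simp only [this, self_mul_sign]

section Matrix

variable {a : ℕ → ℕ → ℝ} {C : ℝ}

lemma tendsto_tsum_mul_of_tendsto (hs : ∀ n, Summable fun k => |a n k|)
    (hC : ∀ n, ∑' k, |a n k| ≤ C)
    (hcore : ∀ x : ℕ → ℝ, (∃ M, ∀ n, |x n| ≤ M) →
      limsup (fun n => ∑' k, a n k * x k) atTop ≤ limsup x atTop)
    {x : ℕ → ℝ} {c M : ℝ} (hxM : ∀ k, |x k| ≤ M) (hx : Tendsto x atTop (𝓝 c)) :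
    Tendsto (fun n => ∑' k, a n k * x k) atTop (𝓝 c) := by
  have hM : 0 ≤ M := (abs_nonneg _).trans (hxM 0)
  refine tendsto_of_limsup_le_of_limsup_neg_le
    (fun n => (abs_tsum_mul_le_s6 (hs n) hxM).trans (mul_le_mul_of_nonneg_right (hC n) hM))
    (hx.limsup_eq ▸ hcore x ⟨M, hxM⟩) ?_
  have := hcore (fun k => -x k) ⟨M, by simpa using hxM⟩
  simpa [mul_neg, tsum_neg, hx.neg.limsup_eq] using this

lemma tendsto_column_zero (hs : ∀ n, Summable fun k => |a n k|) (hC : ∀ n, ∑' k, |a n k| ≤ C)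
    (hcore : ∀ x : ℕ → ℝ, (∃ M, ∀ n, |x n| ≤ M) →
      limsup (fun n => ∑' k, a n k * x k) atTop ≤ limsup x atTop) (k : ℕ) :
    Tendsto (fun n => a n k) atTop (𝓝 0) := by
  have hx : Tendsto (Pi.single k 1 : ℕ → ℝ) atTop (𝓝 0) :=
    tendsto_const_nhds.congr' <| (eventually_gt_atTop k).mono fun m hm =>
      (Pi.single_eq_of_ne (M := fun _ => ℝ) hm.ne' 1).symm
  have hxM : ∀ m, |(Pi.single k 1 : ℕ → ℝ) m| ≤ 1 := fun m => by
    by_cases hm : m = k <;> simp [hm]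
  simpa [Pi.single_apply] using tendsto_tsum_mul_of_tendsto hs hC hcore hxM hx

lemma tendsto_tsum_row (hs : ∀ n, Summable fun k => |a n k|) (hC : ∀ n, ∑' k, |a n k| ≤ C)
    (hcore : ∀ x : ℕ → ℝ, (∃ M, ∀ n, |x n| ≤ M) →
      limsup (fun n => ∑' k, a n k * x k) atTop ≤ limsup x atTop) :
    Tendsto (fun n => ∑' k, a n k) atTop (𝓝 1) := by
  simpa using tendsto_tsum_mul_of_tendsto hs hC hcore (x := fun _ => 1) (M := 1)
    (fun _ => by simp) tendsto_const_nhds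

lemma exists_row_mass_on_Ico (hs : ∀ n, Summable fun k => |a n k|)
    (hcol : ∀ k, Tendsto (fun n => a n k) atTop (𝓝 0)) {L : ℝ}
    (hfreq : ∃ᶠ n in atTop, L < ∑' k, |a n k|) {δ : ℝ} (hδ : 0 < δ) (N M : ℕ) :
    ∃ n M', N < n ∧ M < M' ∧ L < ∑' k, |a n k| ∧
      ∑' k, |a n k| - δ < ∑ k ∈ Finset.Ico M M', |a n k| := by
  have hhead : Tendsto (fun n => ∑ k ∈ Finset.range M, |a n k|) atTop (𝓝 0) := by
    simpa using tendsto_finsetSum (Finset.range M) fun k _ => (hcol k).abs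
  obtain ⟨n, hLn, hheadn, hNn⟩ := (hfreq.and_eventually
    ((hhead.eventually (gt_mem_nhds (half_pos hδ))).and (eventually_gt_atTop N))).exists
  have hpartial := (hs n).tendsto_sum_tsum_nat
  obtain ⟨M', hM', hMM'⟩ := ((hpartial.eventually
    (lt_mem_nhds (sub_lt_self _ (half_pos hδ)))).and (eventually_gt_atTop M)).exists
  refine ⟨n, M', hNn, hMM', hLn, ?_⟩
  rw [Finset.sum_Ico_eq_sub _ hMM'.le]
  linarith

lemma exists_frequently_lt_tsum_mul (hs : ∀ n, Summable fun k => |a n k|)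
    (hcol : ∀ k, Tendsto (fun n => a n k) atTop (𝓝 0)) {L : ℝ}
    (hfreq : ∃ᶠ n in atTop, L < ∑' k, |a n k|) {ε : ℝ} (hε : 0 < ε) :
    ∃ x : ℕ → ℝ, (∀ k, |x k| ≤ 1) ∧ ∃ᶠ n in atTop, L - ε < ∑' k, a n k * x k := by
  choose row col hrow_gt hcol_gt hL hmass using
    exists_row_mass_on_Ico hs hcol hfreq (half_pos hε)
  -- `g (j + 1) = (nⱼ, Mⱼ₊₁)`, where row `nⱼ` carries almost all its mass on the block
  -- `[Mⱼ, Mⱼ₊₁)` of columns.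
  set g : ℕ → ℕ × ℕ := fun j => (fun p => (row p.1 p.2, col p.1 p.2))^[j] (0, 0)
  have hg : ∀ j, g (j + 1) = (row (g j).1 (g j).2, col (g j).1 (g j).2) := fun j =>
    Function.iterate_succ_apply' _ j _
  have hrow_mono : StrictMono fun j => (g j).1 :=
    strictMono_nat_of_lt_succ fun j => by rw [hg]; exact hrow_gt _ _
  have hcol_mono : StrictMono fun j => (g j).2 :=
    strictMono_nat_of_lt_succ fun j => by rw [hg]; exact hcol_gt _ _
  obtain ⟨x, hx1, hx⟩ :=
    exists_abs_le_one_mul_eq_abs_on_blocks (fun j => a (g (j + 1)).1) hcol_mono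
  refine ⟨x, hx1, frequently_atTop.2 fun N => ⟨(g (N + 1)).1, ?_, ?_⟩⟩
  · exact (Nat.le_succ N).trans (hrow_mono.id_le (N + 1))
  · have hclose := tsum_abs_sub_tsum_mul_le (hs _) hx1 _ (hx N)
    rw [hg] at hclose ⊢
    linarith [hL (g N).1 (g N).2, hmass (g N).1 (g N).2]

lemma limsup_tsum_abs_le_one (hs : ∀ n, Summable fun k => |a n k|)
    (hC : ∀ n, ∑' k, |a n k| ≤ C)
    (hcore : ∀ x : ℕ → ℝ, (∃ M, ∀ n, |x n| ≤ M) →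
      limsup (fun n => ∑' k, a n k * x k) atTop ≤ limsup x atTop) :
    limsup (fun n => ∑' k, |a n k|) atTop ≤ 1 := by
  refine le_of_forall_pos_le_add fun ε hε => ?_
  have hfreq : ∃ᶠ n in atTop, limsup (fun n => ∑' k, |a n k|) atTop - ε / 2 < ∑' k, |a n k| :=
    frequently_lt_of_lt_limsup (isBoundedUnder_of ⟨0, fun n =>
      tsum_nonneg fun k => abs_nonneg (a n k)⟩).isCoboundedUnder_le (sub_lt_self _ (half_pos hε))
  obtain ⟨x, hx1, hx⟩ :=
    exists_frequently_lt_tsum_mul hs (tendsto_column_zero hs hC hcore) hfreq (half_pos hε)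
  have hx_limsup : limsup x atTop ≤ 1 :=
    limsup_le_of_le
      (isBoundedUnder_of (r := (· ≥ ·)) ⟨-1, fun k => neg_le_of_abs_le (hx1 k)⟩).isCoboundedUnder_le
      (Eventually.of_forall fun k => le_of_abs_le (hx1 k))
  have hAx := le_limsup_of_frequently_le (hx.mono fun _ => le_of_lt) (isBoundedUnder_of
    ⟨C * 1, fun n => (le_abs_self _).trans ((abs_tsum_mul_le_s6 (hs n) hx1).trans
      (mul_le_mul_of_nonneg_right (hC n) zero_le_one))⟩)
  linarith [hcore x ⟨1, hx1⟩]

end Matrix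

theorem stmt6 (a : ℕ → ℕ → ℝ) (C : ℝ)
    (hnorm : ∀ n, Summable (fun k => |a n k|) ∧ ∑' k, |a n k| ≤ C)
    (hcore : ∀ x : ℕ → ℝ, (∃ M, ∀ n, |x n| ≤ M) →
      limsup (fun n => ∑' k, a n k * x k) atTop ≤ limsup x atTop) :
    Tendsto (fun n => ∑' k, a n k) atTop (nhds 1) ∧
      Tendsto (fun n => ∑' k, |a n k|) atTop (nhds 1) := by
  have hs n := (hnorm n).1
  have hC n := (hnorm n).2
  have hrow := tendsto_tsum_row hs hC hcore
  have hlimsup := limsup_tsum_abs_le_one hs hC hcore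
  refine ⟨hrow, tendsto_order.2 ⟨fun b hb => ?_, fun b hb =>
    eventually_lt_of_limsup_lt (hlimsup.trans_lt hb) (isBoundedUnder_of ⟨C, hC⟩)⟩⟩
  filter_upwards [hrow.eventually (lt_mem_nhds hb)] with n hn
  exact hn.trans_le ((hs n).of_abs.tsum_le_tsum (fun k => le_abs_self _) (hs n))
end

section
/- Let 𝒜 = {A^ν : ν ∈ I} be a nonempty family of infinite real matrices satisfying (M1) sup_n ∑_k |a^ν_{n,k}| < ∞ for each ν and (M2) sup_ν sup_n ∑_k |a^ν_{n,k}| < ∞. Then the following are equivalent: (a) for every bounded sequence x, lim_n A^ν_n x = 0 uniformly in ν; (b) lim_n ∑_k |a^ν_{n,k}| = 0 uniformly in ν. -/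
open Filter

set_option maxHeartbeats 1600000 in
theorem stmt10 {ι : Type*} [Nonempty ι] (a : ι → ℕ → ℕ → ℝ)
    (hM1 : ∀ ν n, Summable (fun k => |a ν n k|))
    (hM2 : ∃ C, ∀ ν n, ∑' k, |a ν n k| ≤ C) :
    (∀ x : ℕ → ℝ, (∃ M, ∀ n, |x n| ≤ M) →
        ∀ ε > 0, ∃ N, ∀ n ≥ N, ∀ ν, |∑' k, a ν n k * x k| ≤ ε) ↔
      (∀ ε > 0, ∃ N, ∀ n ≥ N, ∀ ν, ∑' k, |a ν n k| ≤ ε) := by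
  constructor
  · intro hA ε hε
    by_contra hcon
    push_neg at hcon
    -- single column convergence
    have hone : ∀ k, ∀ δ > 0, ∃ N, ∀ n ≥ N, ∀ ν, |a ν n k| ≤ δ := by
      intro k δ hδ
      obtain ⟨N, hN⟩ := hA (fun j => if j = k then 1 else 0)
        ⟨1, by intro n; split <;> simp⟩ δ hδ
      refine ⟨N, fun n hn ν => ?_⟩
      have h0 := hN n hn ν
      have h2 : (fun j => a ν n j * (if j = k then (1:ℝ) else 0)) =
          fun j => if j = k then a ν n k else 0 := by
        funext j; by_cases h : j = k <;> simp [h]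
      rwa [h2, tsum_ite_eq] at h0
    -- finitely many columns, uniformly
    have hcol : ∀ m, ∀ δ > 0, ∃ N, ∀ n ≥ N, ∀ ν,
        ∑ k ∈ Finset.range m, |a ν n k| ≤ δ := by
      intro m
      induction m with
      | zero => intro δ hδ; exact ⟨0, fun n _ ν => by simp [hδ.le]⟩
      | succ m ih =>
        intro δ hδ
        obtain ⟨N₁, hN₁⟩ := ih (δ/2) (by linarith)
        obtain ⟨N₂, hN₂⟩ := hone m (δ/2) (by linarith)
        refine ⟨max N₁ N₂, fun n hn ν => ?_⟩
        rw [Finset.sum_range_succ]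
        have g1 := hN₁ n (le_trans (le_max_left _ _) hn) ν
        have g2 := hN₂ n (le_trans (le_max_right _ _) hn) ν
        linarith
    -- the gliding hump step
    have hstep : ∀ M j : ℕ, ∃ n, ∃ ν, ∃ M', j ≤ n ∧ M < M' ∧
        ε < ∑' k, |a ν n k| ∧
        ∑ k ∈ Finset.range M, |a ν n k| ≤ ε/8 ∧
        ∑' k, |a ν n k| - ∑ k ∈ Finset.range M', |a ν n k| ≤ ε/8 := by
      intro M j
      obtain ⟨N₁, hN₁⟩ := hcol M (ε/8) (by linarith)
      obtain ⟨n, hn, ν, hν⟩ := hcon (max N₁ j)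
      have htd := (hM1 ν n).hasSum.tendsto_sum_nat
      have hev : ∀ᶠ M'' in atTop,
          ∑' k, |a ν n k| - ∑ k ∈ Finset.range M'', |a ν n k| ≤ ε/8 := by
        have := htd.eventually (eventually_gt_nhds
          (show (∑' k, |a ν n k|) - ε/8 < ∑' k, |a ν n k| by linarith))
        filter_upwards [this] with M'' h using by linarith
      obtain ⟨M'', hM''⟩ := (hev.and (eventually_gt_atTop M)).exists
      exact ⟨n, ν, M'', le_trans (le_max_right _ _) hn, hM''.2, hν,
        hN₁ n (le_trans (le_max_left _ _) hn) ν, hM''.1⟩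
    choose F Fν FM hFn hFM hFε hFhead hFtail using hstep
    obtain ⟨msq, hmsucc⟩ : ∃ msq : ℕ → ℕ, ∀ j, msq (j+1) = FM (msq j) j :=
      ⟨fun j => Nat.rec 0 (fun j Mj => FM Mj j) j, fun j => rfl⟩
    set nsq : ℕ → ℕ := fun j => F (msq j) j with hnsq
    set νsq : ℕ → ι := fun j => Fν (msq j) j with hνsq
    have hmono : StrictMono msq :=
      strictMono_nat_of_lt_succ (fun j => by rw [hmsucc]; exact hFM _ _)
    set b : ℕ → ℕ := fun k => Nat.findGreatest (fun j => msq j ≤ k) k with hb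
    have hblock : ∀ j k, msq j ≤ k → k < msq (j+1) → b k = j := by
      intro j k h1 h2
      have hjk : j ≤ k := le_trans hmono.le_apply h1
      have hge : j ≤ b k := Nat.le_findGreatest hjk h1
      have hle : b k ≤ j := by
        by_contra h
        push_neg at h
        have hspec : msq (b k) ≤ k := Nat.findGreatest_spec (P := fun j' => msq j' ≤ k) hjk h1
        have : msq (j+1) ≤ msq (b k) := hmono.monotone h
        omega
      omega
    set x : ℕ → ℝ := fun k => if 0 ≤ a (νsq (b k)) (nsq (b k)) k then 1 else -1 with hx
    have hxb : ∀ k, |x k| ≤ 1 := by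
      intro k
      by_cases h : 0 ≤ a (νsq (b k)) (nsq (b k)) k <;> simp [hx, h]
    obtain ⟨N, hN⟩ := hA x ⟨1, hxb⟩ (ε/2) (by linarith)
    have key := hN (nsq N) (le_trans (hFn (msq N) N) le_rfl) (νsq N)
    -- notation
    set n := nsq N
    set ν := νsq N
    set M₀ := msq N
    set M₁ := msq (N+1)
    set f : ℕ → ℝ := fun k => a ν n k * x k with hf
    set S := ∑' k, |a ν n k| with hS
    have habs : ∀ k, |f k| ≤ |a ν n k| := by
      intro k
      rw [hf]
      calc |a ν n k * x k| = |a ν n k| * |x k| := abs_mul _ _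
      _ ≤ |a ν n k| * 1 := mul_le_mul_of_nonneg_left (hxb k) (abs_nonneg _)
      _ = |a ν n k| := mul_one _
    have hfabs : Summable (fun k => |f k|) :=
      Summable.of_nonneg_of_le (fun k => abs_nonneg _) habs (hM1 ν n)
    have hfs : Summable f := hfabs.of_abs
    -- properties from the construction at stage N
    have hεS : ε < S := hFε (msq N) N
    have hhead : ∑ k ∈ Finset.range M₀, |a ν n k| ≤ ε/8 := hFhead (msq N) N
    have htail : S - ∑ k ∈ Finset.range M₁, |a ν n k| ≤ ε/8 := by
      have := hFtail (msq N) N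
      rw [← hmsucc] at this
      exact this
    -- split the sum
    have hsplit : ∑ k ∈ Finset.range M₁, f k + ∑' k, f (k + M₁) = ∑' k, f k :=
      Summable.sum_add_tsum_nat_add M₁ hfs
    -- block sum equals block sum of abs
    have hblocksum : ∑ k ∈ Finset.Ico M₀ M₁, f k = ∑ k ∈ Finset.Ico M₀ M₁, |a ν n k| := by
      apply Finset.sum_congr rfl
      intro k hk
      rw [Finset.mem_Ico] at hk
      have hbk : b k = N := hblock N k hk.1 hk.2
      rw [hf, hx]
      dsimp only
      rw [hbk]
      by_cases h : 0 ≤ a ν n k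
      · rw [if_pos h, mul_one, abs_of_nonneg h]
      · rw [if_neg h, mul_neg_one, abs_of_neg (lt_of_not_ge h)]
    have hM₀₁ : M₀ ≤ M₁ := (hmono (Nat.lt_succ_self N)).le
    have hico : ∑ k ∈ Finset.Ico M₀ M₁, |a ν n k| =
        ∑ k ∈ Finset.range M₁, |a ν n k| - ∑ k ∈ Finset.range M₀, |a ν n k| :=
      Finset.sum_Ico_eq_sub _ hM₀₁
    have hsplit2 : ∑ k ∈ Finset.range M₁, f k =
        ∑ k ∈ Finset.range M₀, f k + ∑ k ∈ Finset.Ico M₀ M₁, f k :=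
      (Finset.sum_range_add_sum_Ico _ hM₀₁).symm
    -- head bound
    have hheadf : |∑ k ∈ Finset.range M₀, f k| ≤ ε/8 := by
      calc |∑ k ∈ Finset.range M₀, f k| ≤ ∑ k ∈ Finset.range M₀, |f k| :=
            Finset.abs_sum_le_sum_abs _ _
      _ ≤ ∑ k ∈ Finset.range M₀, |a ν n k| := Finset.sum_le_sum (fun k _ => habs k)
      _ ≤ ε/8 := hhead
    -- tail bound
    have hshiftabs : Summable (fun k => |f (k + M₁)|) :=
      (summable_nat_add_iff M₁).mpr hfabs
    have hshifta : Summable (fun k => |a ν n (k + M₁)|) :=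
      (summable_nat_add_iff M₁).mpr (hM1 ν n)
    have htailval : ∑' k, |a ν n (k + M₁)| = S - ∑ k ∈ Finset.range M₁, |a ν n k| := by
      have := Summable.sum_add_tsum_nat_add M₁ (hM1 ν n)
      rw [hS]; linarith
    have htailf : |∑' k, f (k + M₁)| ≤ ε/8 := by
      have h1 : |∑' k, f (k + M₁)| ≤ ∑' k, |f (k + M₁)| := by
        have := norm_tsum_le_tsum_norm (f := fun k => f (k + M₁))
          (by simpa [Real.norm_eq_abs] using hshiftabs)
        simpa [Real.norm_eq_abs] using this
      have h2 : ∑' k, |f (k + M₁)| ≤ ∑' k, |a ν n (k + M₁)| :=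
        Summable.tsum_le_tsum (fun k => habs _) hshiftabs hshifta
      linarith [htailval, htail]
    -- conclude
    have hlow : ε/2 < ∑' k, f k := by
      have h1 : ∑ k ∈ Finset.Ico M₀ M₁, f k ≥ S - ε/4 := by
        rw [hblocksum, hico]; linarith
      have h2 : ∑ k ∈ Finset.range M₀, f k ≥ -(ε/8) := neg_le_of_abs_le hheadf
      have h3 : ∑' k, f (k + M₁) ≥ -(ε/8) := neg_le_of_abs_le htailf
      have := hsplit
      rw [hsplit2] at this
      linarith
    have : |∑' k, f k| ≤ ε/2 := key
    have := le_abs_self (∑' k, f k)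
    linarith
  · rintro hB x ⟨M, hxM⟩ ε hε
    have hM0 : 0 ≤ M := le_trans (abs_nonneg _) (hxM 0)
    obtain ⟨N, hN⟩ := hB (ε/(M+1)) (by positivity)
    refine ⟨N, fun n hn ν => ?_⟩
    have hbd : ∀ k, |a ν n k * x k| ≤ |a ν n k| * M := by
      intro k
      rw [abs_mul]
      exact mul_le_mul_of_nonneg_left (hxM k) (abs_nonneg _)
    have hf : Summable (fun k => |a ν n k * x k|) :=
      Summable.of_nonneg_of_le (fun k => abs_nonneg _) hbd ((hM1 ν n).mul_right M)
    have h1 : |∑' k, a ν n k * x k| ≤ ∑' k, |a ν n k * x k| := by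
      have := norm_tsum_le_tsum_norm (f := fun k => a ν n k * x k)
        (by simp only [Real.norm_eq_abs]; exact hf)
      simp only [Real.norm_eq_abs] at this
      exact this
    have h2 : ∑' k, |a ν n k * x k| ≤ ∑' k, |a ν n k| * M :=
      Summable.tsum_le_tsum hbd hf ((hM1 ν n).mul_right M)
    have h3 : ∑' k, |a ν n k| * M = (∑' k, |a ν n k|) * M := tsum_mul_right
    have h4 := hN n hn ν
    calc |∑' k, a ν n k * x k| ≤ (∑' k, |a ν n k|) * M := by
          rw [← h3]; exact h1.trans h2
    _ ≤ ε/(M+1) * M := mul_le_mul_of_nonneg_right h4 hM0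
    _ ≤ ε := by
        rw [div_mul_eq_mul_div, div_le_iff₀ (by linarith)]
        nlinarith
end

section
/- Let σ : ℕ → ℕ be an injection without periodic points. A real matrix A = (a_{n,k}) with sup_n ∑_k |a_{n,k}| < ∞ is σ-regular (i.e., for every convergent bounded sequence x, the transformed sequence A x is σ-convergent to lim x) if and only if: (K2) σ-lim_n ∑_k a_{n,k} = 1, and (K3) σ-lim_n a_{n,k} = 0 for each fixed k. -/
open Filter

/-- `σ-lim y = η`: the averages `(1/(n+1)) ∑_{i≤n} y (σ (ν+i))` tend to `η` uniformly in `ν`. -/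
def SigmaLim (σ : ℕ → ℕ) (y : ℕ → ℝ) (η : ℝ) : Prop :=
  ∀ ε > 0, ∃ N : ℕ, ∀ n ≥ N, ∀ ν : ℕ,
    |(1 / ((n : ℝ) + 1)) * ∑ i ∈ Finset.range (n + 1), y (σ (ν + i)) - η| ≤ ε

/-!
Averaging the rows of `A` along `σ` gives a matrix `B` with rows indexed by pairs `(n, ν)`, still
bounded in `ℓ¹` by `C`, and `σ-lim (A x) = l` says exactly that `B x → l` as `n → ∞` uniformly in
`ν`. Conditions (K2) and (K3) say that the row sums of `B` tend to `1` and its columns to `0`, so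
the Silverman–Toeplitz argument applies: write `x = l + (x - l)`, control finitely many columns
by (K3) and the tail by the row bound. Necessity comes from testing `x = 1` and `x = eₖ`.
-/

open Topology Finset

lemma summable_mul_of_tendsto {f x : ℕ → ℝ} {l : ℝ} (hf : Summable fun k => |f k|)
    (hx : Tendsto x atTop (𝓝 l)) : Summable fun k => f k * x k := by
  obtain ⟨M, hM⟩ := isBounded_iff_forall_norm_le.mp (Metric.isBounded_range_of_tendsto x hx)
  exact Summable.of_norm_bounded (hf.mul_right M) fun k => by
    rw [norm_mul, Real.norm_eq_abs]
    exact mul_le_mul_of_nonneg_left (hM _ ⟨k, rfl⟩) (abs_nonneg _)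

lemma abs_tsum_mul_le_sum_add {f z : ℕ → ℝ} {C δ : ℝ} (hf : Summable fun k => |f k|)
    (hfC : ∑' k, |f k| ≤ C) (hfz : Summable fun k => f k * z k) (K : ℕ)
    (hzK : ∀ k ≥ K, |z k| ≤ δ) :
    |∑' k, f k * z k| ≤ ∑ k ∈ range K, |f k| * |z k| + C * δ := by
  have hδ : 0 ≤ δ := (abs_nonneg _).trans (hzK K le_rfl)
  have hfz' : Summable fun k => |f k| * |z k| := by simpa only [abs_mul] using hfz.abs
  have htail : ∑' j, |f (j + K)| ≤ C := by
    have hhead : 0 ≤ ∑ k ∈ range K, |f k| := sum_nonneg fun k _ => abs_nonneg _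
    linarith [hf.sum_add_tsum_nat_add K]
  calc |∑' k, f k * z k| ≤ ∑' k, |f k| * |z k| := by
        simpa only [Real.norm_eq_abs, abs_mul] using norm_tsum_le_tsum_norm hfz.norm
    _ = ∑ k ∈ range K, |f k| * |z k| + ∑' j, |f (j + K)| * |z (j + K)| :=
        (hfz'.sum_add_tsum_nat_add K).symm
    _ ≤ ∑ k ∈ range K, |f k| * |z k| + ∑' j, |f (j + K)| * δ := by
        refine add_le_add_right (Summable.tsum_le_tsum (fun j => ?_)
          ((summable_nat_add_iff K).mpr hfz') (((summable_nat_add_iff K).mpr hf).mul_right δ)) _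
        exact mul_le_mul_of_nonneg_left (hzK _ (Nat.le_add_left _ _)) (abs_nonneg _)
    _ ≤ ∑ k ∈ range K, |f k| * |z k| + C * δ := by
        rw [tsum_mul_right]
        gcongr

section Toeplitz

variable {ι : Type*} {F : Filter ι} {b : ι → ℕ → ℝ} {C : ℝ}

theorem tendsto_tsum_mul_of_tendsto_zero
    (hb : ∀ i, Summable (fun k => |b i k|) ∧ ∑' k, |b i k| ≤ C)
    (h0 : ∀ k, Tendsto (fun i => b i k) F (𝓝 0)) {z : ℕ → ℝ} (hz : Tendsto z atTop (𝓝 0)) :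
    Tendsto (fun i => ∑' k, b i k * z k) F (𝓝 0) := by
  rw [Metric.tendsto_nhds]
  intro ε hε
  obtain ⟨δ, hδ, hCδ⟩ : ∃ δ > 0, C * δ < ε / 2 := by
    refine ⟨ε / (2 * (|C| + 1)), by positivity, ?_⟩
    rw [mul_div_assoc', div_lt_div_iff₀ (by positivity) two_pos]
    nlinarith [le_abs_self C]
  obtain ⟨K, hK⟩ : ∃ K, ∀ k ≥ K, |z k| ≤ δ := by
    obtain ⟨K, hK⟩ := Metric.tendsto_atTop.mp hz δ hδ
    exact ⟨K, fun k hk => by simpa using (hK k hk).le⟩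
  have hhead : Tendsto (fun i => ∑ k ∈ range K, |b i k| * |z k|) F (𝓝 0) := by
    simpa using tendsto_finsetSum (range K) fun k _ => (h0 k).abs.mul_const |z k|
  filter_upwards [hhead.eventually (gt_mem_nhds (half_pos hε))] with i hi
  rw [Real.dist_0_eq_abs]
  calc |∑' k, b i k * z k| ≤ ∑ k ∈ range K, |b i k| * |z k| + C * δ :=
        abs_tsum_mul_le_sum_add (hb i).1 (hb i).2 (summable_mul_of_tendsto (hb i).1 hz) K hK
    _ < ε / 2 + ε / 2 := add_lt_add hi hCδ
    _ = ε := add_halves ε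

/-- Silverman–Toeplitz, along an arbitrary filter. -/
theorem tendsto_tsum_mul_of_tendsto_s18
    (hb : ∀ i, Summable (fun k => |b i k|) ∧ ∑' k, |b i k| ≤ C)
    (h1 : Tendsto (fun i => ∑' k, b i k) F (𝓝 1)) (h0 : ∀ k, Tendsto (fun i => b i k) F (𝓝 0))
    {x : ℕ → ℝ} {l : ℝ} (hx : Tendsto x atTop (𝓝 l)) :
    Tendsto (fun i => ∑' k, b i k * x k) F (𝓝 l) := by
  have hz : Tendsto (fun k => x k - l) atTop (𝓝 0) := by simpa using hx.sub_const l
  have hsplit : ∀ i, ∑' k, b i k * x k = ∑' k, b i k * (x k - l) + (∑' k, b i k) * l := by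
    intro i
    rw [← tsum_mul_right, ← Summable.tsum_add (summable_mul_of_tendsto (hb i).1 hz)
      ((summable_abs_iff.mp (hb i).1).mul_right l)]
    exact tsum_congr fun k => by ring
  simpa only [hsplit, zero_add, one_mul] using
    (tendsto_tsum_mul_of_tendsto_zero hb h0 hz).add (h1.mul_const l)

end Toeplitz

section SigmaMean

variable {σ : ℕ → ℕ}

/-- `sigmaMean σ y (n, ν)` is the average of `y` over `σ ν, …, σ (ν + n)`. -/
noncomputable def sigmaMean (σ : ℕ → ℕ) (y : ℕ → ℝ) (p : ℕ × ℕ) : ℝ :=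
  (1 / ((p.1 : ℝ) + 1)) * ∑ i ∈ range (p.1 + 1), y (σ (p.2 + i))

theorem sigmaLim_iff_tendsto {y : ℕ → ℝ} {η : ℝ} :
    SigmaLim σ y η ↔ Tendsto (sigmaMean σ y) (atTop ×ˢ ⊤) (𝓝 η) := by
  simp only [Metric.tendsto_nhds, Filter.Eventually, mem_prod_top, Set.mem_ofPred_eq,
    mem_atTop_sets, Real.dist_eq, sigmaMean, SigmaLim]
  refine ⟨fun h ε hε => ?_, fun h ε hε => ?_⟩
  · obtain ⟨N, hN⟩ := h (ε / 2) (half_pos hε)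
    exact ⟨N, fun n hn ν => (hN n hn ν).trans_lt (half_lt_self hε)⟩
  · obtain ⟨N, hN⟩ := h ε hε
    exact ⟨N, fun n hn ν => (hN n hn ν).le⟩

lemma sigmaMean_mono {y y' : ℕ → ℝ} (h : ∀ m, y m ≤ y' m) (p : ℕ × ℕ) :
    sigmaMean σ y p ≤ sigmaMean σ y' p := by
  unfold sigmaMean
  gcongr with i
  exact h _

lemma abs_sigmaMean_le (y : ℕ → ℝ) (p : ℕ × ℕ) :
    |sigmaMean σ y p| ≤ sigmaMean σ (fun m => |y m|) p := by
  unfold sigmaMean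
  rw [abs_mul, abs_of_pos (by positivity)]
  gcongr
  exact abs_sum_le_sum_abs _ _

@[simp]
lemma sigmaMean_const (c : ℝ) (p : ℕ × ℕ) : sigmaMean σ (fun _ => c) p = c := by
  simp only [sigmaMean, sum_const, card_range, nsmul_eq_mul]
  field_simp
  push_cast
  ring

lemma sigmaMean_mul_const (y : ℕ → ℝ) (c : ℝ) (p : ℕ × ℕ) :
    sigmaMean σ (fun m => y m * c) p = sigmaMean σ y p * c := by
  simp only [sigmaMean, ← sum_mul, mul_assoc]

lemma summable_sigmaMean {f : ℕ → ℕ → ℝ} (hf : ∀ m, Summable (f m)) (p : ℕ × ℕ) :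
    Summable fun k => sigmaMean σ (fun m => f m k) p :=
  (summable_sum fun _ _ => hf _).mul_left _

lemma sigmaMean_tsum {f : ℕ → ℕ → ℝ} (hf : ∀ m, Summable (f m)) (p : ℕ × ℕ) :
    sigmaMean σ (fun m => ∑' k, f m k) p = ∑' k, sigmaMean σ (fun m => f m k) p := by
  simp only [sigmaMean, Summable.tsum_finsetSum fun i _ => hf _, tsum_mul_left]

lemma sigmaMean_row_bound {a : ℕ → ℕ → ℝ} {C : ℝ}
    (hnorm : ∀ n, Summable (fun k => |a n k|) ∧ ∑' k, |a n k| ≤ C) (p : ℕ × ℕ) :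
    Summable (fun k => |sigmaMean σ (fun m => a m k) p|) ∧
      ∑' k, |sigmaMean σ (fun m => a m k) p| ≤ C := by
  have hS := summable_sigmaMean (σ := σ) (fun m => (hnorm m).1) p
  have hle k := abs_sigmaMean_le (σ := σ) (fun m => a m k) p
  refine ⟨hS.of_nonneg_of_le (fun _ => abs_nonneg _) hle, ?_⟩
  calc ∑' k, |sigmaMean σ (fun m => a m k) p|
      ≤ ∑' k, sigmaMean σ (fun m => |a m k|) p :=
        (hS.of_nonneg_of_le (fun _ => abs_nonneg _) hle).tsum_le_tsum hle hS
    _ = sigmaMean σ (fun m => ∑' k, |a m k|) p := (sigmaMean_tsum (fun m => (hnorm m).1) p).symm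
    _ ≤ sigmaMean σ (fun _ => C) p := sigmaMean_mono (fun m => (hnorm m).2) p
    _ = C := sigmaMean_const C p

end SigmaMean

theorem stmt18_general (σ : ℕ → ℕ)
    (a : ℕ → ℕ → ℝ) (C : ℝ)
    (hnorm : ∀ n, Summable (fun k => |a n k|) ∧ ∑' k, |a n k| ≤ C) :
    (∀ x : ℕ → ℝ, ∀ l : ℝ, (∃ M, ∀ n, |x n| ≤ M) → Tendsto x atTop (nhds l) →
        SigmaLim σ (fun n => ∑' k, a n k * x k) l) ↔
      (SigmaLim σ (fun n => ∑' k, a n k) 1 ∧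
        ∀ k, SigmaLim σ (fun n => a n k) 0) := by
  constructor
  · intro h
    refine ⟨?_, fun k => ?_⟩
    · simpa only [mul_one] using h (fun _ => 1) 1 ⟨1, fun _ => by norm_num⟩ tendsto_const_nhds
    · have hsingle : Tendsto (Pi.single k 1 : ℕ → ℝ) atTop (𝓝 0) :=
        tendsto_const_nhds.congr' <| (eventually_gt_atTop k).mono fun j hj =>
          (Pi.single_eq_of_ne (M := fun _ => ℝ) hj.ne' 1).symm
      have hbound : ∀ j, |(Pi.single k 1 : ℕ → ℝ) j| ≤ 1 := fun j => by
        rcases eq_or_ne j k with rfl | hj <;> simp [*]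
      simpa [Pi.single_apply] using h (Pi.single k 1) 0 ⟨1, hbound⟩ hsingle
  · rintro ⟨h1, h0⟩ x l - hx
    rw [sigmaLim_iff_tendsto] at h1 ⊢
    simp only [sigmaLim_iff_tendsto] at h0
    rw [funext (sigmaMean_tsum fun m => summable_abs_iff.mp (hnorm m).1)] at h1
    have hmean : sigmaMean σ (fun n => ∑' k, a n k * x k) =
        fun p => ∑' k, sigmaMean σ (fun m => a m k) p * x k := funext fun p => by
      simp only [sigmaMean_tsum (fun m => summable_mul_of_tendsto (hnorm m).1 hx),
        sigmaMean_mul_const]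
    rw [hmean]
    exact tendsto_tsum_mul_of_tendsto_s18 (sigmaMean_row_bound hnorm) h1 h0 hx

/-- Schaefer's characterization of σ-regular matrices. -/
theorem stmt18 (σ : ℕ → ℕ) (hinj : Function.Injective σ)
    (hper : ∀ n p : ℕ, σ^[p + 1] n ≠ n)
    (a : ℕ → ℕ → ℝ) (C : ℝ)
    (hnorm : ∀ n, Summable (fun k => |a n k|) ∧ ∑' k, |a n k| ≤ C) :
    (∀ x : ℕ → ℝ, ∀ l : ℝ, (∃ M, ∀ n, |x n| ≤ M) → Tendsto x atTop (nhds l) →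
        SigmaLim σ (fun n => ∑' k, a n k * x k) l) ↔
      (SigmaLim σ (fun n => ∑' k, a n k) 1 ∧
        ∀ k, SigmaLim σ (fun n => a n k) 0) :=
  stmt18_general σ a C hnorm
end
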